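/- For all n > 0 and all m, the term u_n r_m beta-reduces in exactly n steps to r_{n+m}, where u_1 = λx.λy.(y x x), u_{n+1} = λx.(u_n (λy.(y x x))), r_0 = λz.z, and r_{n+1} = λy.(y r_n r_n). -/

import Mathlib

/-- Lambda terms with named variables. -/
inductive Term : Type
  | var : ℕ → Term
  | lam : ℕ → Term → Term
  | app : Term → Term → Term
deriving DecidableEq

namespace Term

/-- Size: the number of constructors. -/
def size : Term → ℕ
  | var _ => 1
  | lam _ t => t.size + 1
  | app t s => t.size + s.size + 1

/-- Substitution (stopping at matching binders). -/
def subst (x : ℕ) (u : Term) : Term → Term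
  | var y => if y = x then u else var y
  | lam y t => if y = x then lam y t else lam y (subst x u t)
  | app t s => app (subst x u t) (subst x u s)

end Term

/-- Beta reduction: compatible closure of the root beta rule. -/
inductive Beta : Term → Term → Prop
  | beta (x : ℕ) (t u : Term) : Beta (.app (.lam x t) u) (Term.subst x u t)
  | appL {t t' : Term} (u : Term) : Beta t t' → Beta (.app t u) (.app t' u)
  | appR {u u' : Term} (t : Term) : Beta u u' → Beta (.app t u) (.app t u')
  | lam {t t' : Term} (x : ℕ) : Beta t t' → Beta (.lam x t) (.lam x t')

/-- Weak head reduction. -/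
inductive Wh : Term → Term → Prop
  | beta (x : ℕ) (t u : Term) : Wh (.app (.lam x t) u) (Term.subst x u t)
  | appL {t t' : Term} (u : Term) : Wh t t' → Wh (.app t u) (.app t' u)

/-- `StepN R n a b`: `a` reduces to `b` in exactly `n` `R`-steps. -/
inductive StepN {α : Type} (R : α → α → Prop) : ℕ → α → α → Prop
  | refl (a : α) : StepN R 0 a a
  | step {a b c : α} {n : ℕ} : R a b → StepN R n b c → StepN R (n + 1) a c

/-- `λy.(y x x)` with `x` the variable 0 and `y` the variable 1. -/
def lamyxx : Term := .lam 1 (.app (.app (.var 1) (.var 0)) (.var 0))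

/-- `u_1 = λx.λy.(y x x)`, `u_{n+1} = λx.(u_n (λy.(y x x)))` (value at 0 is irrelevant). -/
def uFam : ℕ → Term
  | 0 => .var 0
  | 1 => .lam 0 lamyxx
  | n + 2 => .lam 0 (.app (uFam (n + 1)) lamyxx)

/-- `r_0 = I = λz.z`, `r_{n+1} = λy.(y r_n r_n)`. -/
def rFam : ℕ → Term
  | 0 => .lam 2 (.var 2)
  | n + 1 => .lam 1 (.app (.app (.var 1) (rFam n)) (rFam n))

/-! Each head step of `u_{n+1} r_m` substitutes `r_m` for `x` in `λy.(y x x)`, which yields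
`r_{m+1}`, while `u_n` is untouched since it binds `x` itself; so `u_{n+1} r_m → u_n r_{m+1}`,
and `u_1 r_m → r_{m+1}` ends the chain after `n` steps. -/

lemma lamyxx_subst_rFam (m : ℕ) : Term.subst 0 (rFam m) lamyxx = rFam (m + 1) := by
  simp [lamyxx, Term.subst, rFam]

lemma uFam_subst_zero (n : ℕ) (u : Term) : Term.subst 0 u (uFam (n + 1)) = uFam (n + 1) := by
  cases n <;> simp [uFam, Term.subst]

lemma beta_uFam_one_rFam (m : ℕ) : Beta (.app (uFam 1) (rFam m)) (rFam (m + 1)) := by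
  rw [uFam, ← lamyxx_subst_rFam]
  exact .beta 0 lamyxx (rFam m)

lemma beta_uFam_succ_rFam (n m : ℕ) :
    Beta (.app (uFam (n + 2)) (rFam m)) (.app (uFam (n + 1)) (rFam (m + 1))) := by
  have h := Beta.beta 0 (.app (uFam (n + 1)) lamyxx) (rFam m)
  rwa [Term.subst, uFam_subst_zero, lamyxx_subst_rFam] at h

/-- for `n > 0` and any `m`, `u_n r_m` beta-reduces in exactly `n` steps to `r_{n+m}`. -/
theorem uFam_rFam_stepN :
    ∀ n : ℕ, 0 < n → ∀ m : ℕ, StepN Beta n (.app (uFam n) (rFam m)) (rFam (n + m)) := by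
  intro n hn
  induction n, hn using Nat.le_induction with
  | base =>
    intro m
    rw [Nat.add_comm]
    exact .step (beta_uFam_one_rFam m) (.refl _)
  | succ n hn ih =>
    intro m
    obtain ⟨k, rfl⟩ := Nat.exists_eq_add_of_le' hn
    have hrest := ih (m + 1)
    rw [show k + 1 + (m + 1) = k + 1 + 1 + m by omega] at hrest
    exact .step (beta_uFam_succ_rFam k m) hrest
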